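/- The inequality S(1,2,4) < 8π·(1+2+4−4) + 12π·E(2√2/3) holds; explicitly, (4π/√15)·( 30·E(1/√5) − 11·K(1/√5) ) < 24π + 12π·E(2√2/3). -/

import Mathlib

open Real

/-- Complete elliptic integral of the first kind. -/
noncomputable def completeEllipticK (k : ℝ) : ℝ :=
  ∫ θ in (0:ℝ)..(π/2), 1 / Real.sqrt (1 - k^2 * Real.sin θ ^ 2)

/-- Complete elliptic integral of the second kind. -/
noncomputable def completeEllipticE (k : ℝ) : ℝ :=
  ∫ θ in (0:ℝ)..(π/2), Real.sqrt (1 - k^2 * Real.sin θ ^ 2)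

/-!
The elliptic integrals are bounded by comparing integrands on `[0, π/2]`:
`√(1 - x) ≤ 1 - x/2` gives `E(k) ≤ (π/2)(1 - k²/4)`, the integrand of `K` is at least `1`,
and the integrand of `E` is at least `√(1 - k²)`.  With `k² = 1/5` the left-hand side is then
at most `35π²/√15 < 90`, while the right-hand side is at least `24π + 2π² > 95`.
-/

lemma intervalIntegral_sin_sq_zero_pi_div_two : ∫ θ in (0:ℝ)..(π/2), sin θ ^ 2 = π / 4 := by
  simp [integral_sin_sq]
  ring

lemma continuous_one_sub_mul_sin_sq (c : ℝ) : Continuous fun θ : ℝ => 1 - c * sin θ ^ 2 := by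
  fun_prop

lemma completeEllipticE_le {k : ℝ} (hk : k ^ 2 ≤ 2) :
    completeEllipticE k ≤ π / 2 * (1 - k ^ 2 / 4) := by
  have hpoint : ∀ θ ∈ Set.Icc (0:ℝ) (π/2),
      √(1 - k ^ 2 * sin θ ^ 2) ≤ 1 - k ^ 2 / 2 * sin θ ^ 2 := by
    intro θ _
    have hs := sin_sq_le_one θ
    have hk0 := sq_nonneg k
    refine Real.sqrt_le_iff.mpr ⟨by nlinarith, ?_⟩
    nlinarith [sq_nonneg (k ^ 2 * sin θ ^ 2)]
  calc completeEllipticE k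
      ≤ ∫ θ in (0:ℝ)..(π/2), (1 - k ^ 2 / 2 * sin θ ^ 2) :=
        intervalIntegral.integral_mono_on (by positivity)
          ((continuous_one_sub_mul_sin_sq _).sqrt.intervalIntegrable _ _)
          ((continuous_one_sub_mul_sin_sq _).intervalIntegrable _ _) hpoint
    _ = π / 2 * (1 - k ^ 2 / 4) := by
        rw [intervalIntegral.integral_sub intervalIntegrable_const
          ((by fun_prop : Continuous fun θ => k ^ 2 / 2 * sin θ ^ 2).intervalIntegrable _ _),
          intervalIntegral.integral_const_mul, intervalIntegral_sin_sq_zero_pi_div_two]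
        simp only [intervalIntegral.integral_const, sub_zero, smul_eq_mul, mul_one]
        ring

lemma pi_div_two_mul_sqrt_one_sub_sq_le_completeEllipticE (k : ℝ) :
    π / 2 * √(1 - k ^ 2) ≤ completeEllipticE k := by
  have hpoint : ∀ θ ∈ Set.Icc (0:ℝ) (π/2), √(1 - k ^ 2) ≤ √(1 - k ^ 2 * sin θ ^ 2) := by
    intro θ _
    exact Real.sqrt_le_sqrt (by nlinarith [sin_sq_le_one θ, sq_nonneg k])
  calc π / 2 * √(1 - k ^ 2) = ∫ _ in (0:ℝ)..(π/2), √(1 - k ^ 2) := by simp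
    _ ≤ completeEllipticE k :=
        intervalIntegral.integral_mono_on (by positivity) intervalIntegrable_const
          ((continuous_one_sub_mul_sin_sq _).sqrt.intervalIntegrable _ _) hpoint

lemma pi_div_two_le_completeEllipticK {k : ℝ} (hk : k ^ 2 < 1) :
    π / 2 ≤ completeEllipticK k := by
  have hpos : ∀ θ : ℝ, 0 < 1 - k ^ 2 * sin θ ^ 2 := fun θ => by
    nlinarith [sin_sq_le_one θ, sq_nonneg k, sq_nonneg (sin θ)]
  have hcont : Continuous fun θ : ℝ => 1 / √(1 - k ^ 2 * sin θ ^ 2) :=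
    continuous_const.div (continuous_one_sub_mul_sin_sq _).sqrt
      fun θ => (Real.sqrt_pos.mpr (hpos θ)).ne'
  have hpoint : ∀ θ ∈ Set.Icc (0:ℝ) (π/2), (1:ℝ) ≤ 1 / √(1 - k ^ 2 * sin θ ^ 2) := by
    intro θ _
    rw [le_div_iff₀ (Real.sqrt_pos.mpr (hpos θ)), one_mul]
    exact Real.sqrt_le_one.mpr (by nlinarith [sq_nonneg k, sq_nonneg (sin θ)])
  calc π / 2 = ∫ _ in (0:ℝ)..(π/2), (1:ℝ) := by simp
    _ ≤ completeEllipticK k :=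
        intervalIntegral.integral_mono_on (by positivity) intervalIntegrable_const
          (hcont.intervalIntegrable _ _) hpoint

/-- The area `S(a,b,c)` of the generalized Lawson surface `T_{a,b,c}`. -/
noncomputable def lawsonArea (a b c : ℝ) : ℝ :=
  4 * π / Real.sqrt (c^2 - a^2) *
    (2 * (c^2 - a^2) * completeEllipticE (Real.sqrt ((b^2 - a^2) / (c^2 - a^2)))
      - (c^2 - a^2 - b^2) * completeEllipticK (Real.sqrt ((b^2 - a^2) / (c^2 - a^2))))

lemma lawsonArea_one_two_four :
    lawsonArea 1 2 4 = 4 * π / √15 *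
      (30 * completeEllipticE (1 / √5) - 11 * completeEllipticK (1 / √5)) := by
  unfold lawsonArea
  rw [show ((2:ℝ) ^ 2 - 1 ^ 2) / ((4:ℝ) ^ 2 - 1 ^ 2) = 5⁻¹ by norm_num, Real.sqrt_inv, one_div]
  norm_num

lemma sq_one_div_sqrt_five : (1 / √5 : ℝ) ^ 2 = 1 / 5 := by
  rw [div_pow, one_pow, Real.sq_sqrt (by norm_num)]

lemma sq_two_mul_sqrt_two_div_three : (2 * √2 / 3 : ℝ) ^ 2 = 8 / 9 := by
  rw [div_pow, mul_pow, Real.sq_sqrt (by norm_num)]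
  norm_num

lemma thirty_mul_completeEllipticE_sub_eleven_mul_completeEllipticK_le :
    30 * completeEllipticE (1 / √5) - 11 * completeEllipticK (1 / √5) ≤ 35 * π / 4 := by
  have hE := completeEllipticE_le (k := 1 / √5) (by rw [sq_one_div_sqrt_five]; norm_num)
  have hK := pi_div_two_le_completeEllipticK (k := 1 / √5) (by rw [sq_one_div_sqrt_five]; norm_num)
  rw [sq_one_div_sqrt_five] at hE
  linarith

lemma pi_div_six_le_completeEllipticE : π / 6 ≤ completeEllipticE (2 * √2 / 3) := by
  have h := pi_div_two_mul_sqrt_one_sub_sq_le_completeEllipticE (2 * √2 / 3)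
  rwa [sq_two_mul_sqrt_two_div_three,
    show √(1 - 8 / 9 : ℝ) = 1 / 3 by
      rw [show (1 - 8 / 9 : ℝ) = (1 / 3) ^ 2 by norm_num, Real.sqrt_sq (by norm_num)],
    show π / 2 * (1 / 3) = π / 6 by ring] at h

lemma four_pi_div_sqrt_fifteen_mul_lt : 4 * π / √15 * (35 * π / 4) < 24 * π + 2 * π ^ 2 := by
  have hs0 : (0:ℝ) < √15 := Real.sqrt_pos.mpr (by norm_num)
  have hs : √15 ^ 2 = 15 := Real.sq_sqrt (by norm_num)
  have h387 : (3.87:ℝ) < √15 := by nlinarith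
  have := pi_gt_d6
  have := pi_lt_d2
  rw [div_mul_eq_mul_div, div_lt_iff₀ hs0]
  nlinarith

/-- The exceptional case `(a,b,c) = (1,2,4)`:
`(4π/√15)(30E(1/√5) − 11K(1/√5)) < 24π + 12πE(2√2/3)`. -/
theorem exceptional_124 :
    lawsonArea 1 2 4 < 8 * π * (1 + 2 + 4 - 4)
        + 12 * π * completeEllipticE (2 * Real.sqrt 2 / 3) ∧
    4 * π / Real.sqrt 15 * (30 * completeEllipticE (1 / Real.sqrt 5)
        - 11 * completeEllipticK (1 / Real.sqrt 5))
      < 24 * π + 12 * π * completeEllipticE (2 * Real.sqrt 2 / 3) := by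
  have key : 4 * π / √15 * (30 * completeEllipticE (1 / √5) - 11 * completeEllipticK (1 / √5))
      < 24 * π + 12 * π * completeEllipticE (2 * √2 / 3) :=
    calc _ ≤ 4 * π / √15 * (35 * π / 4) :=
          mul_le_mul_of_nonneg_left thirty_mul_completeEllipticE_sub_eleven_mul_completeEllipticK_le (by positivity)
      _ < 24 * π + 2 * π ^ 2 := four_pi_div_sqrt_fifteen_mul_lt
      _ ≤ 24 * π + 12 * π * completeEllipticE (2 * √2 / 3) := by
          nlinarith [pi_div_six_le_completeEllipticE, pi_pos]
  refine ⟨?_, key⟩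
  rw [lawsonArea_one_two_four]
  linarith
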